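/- Let (A,B) be a system and let D = (u,x) be input-state data of length T consistent with (A,B). If the inputs u(0),…,u(T−1) are persistently exciting of order n+1, then the column span of the stacked (n+m)×T matrix [X_-; U_-] equals {(ξ,η) ∈ ℝ^n×ℝ^m : ξ ∈ R(A,[B x(0)])}, where [B x(0)] is the n×(m+1) matrix obtained by appending x(0) to B. -/

import Mathlib

open Matrix

/-- A system: a pair `(A, B)` of real matrices of sizes `n × n` and `n × m`. -/
abbrev Sys (n m : ℕ) := Matrix (Fin n) (Fin n) ℝ × Matrix (Fin n) (Fin m) ℝ

/-- `(A, B)` is consistent with the input-state data `(u, x)` of length `T`. -/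
def Consistent {n m T : ℕ} (A : Matrix (Fin n) (Fin n) ℝ) (B : Matrix (Fin n) (Fin m) ℝ)
    (u : Fin T → Fin m → ℝ) (x : Fin (T + 1) → Fin n → ℝ) : Prop :=
  ∀ t : Fin T, x t.succ = A.mulVec (x t.castSucc) + B.mulVec (u t)

/-- The set `Σ_D` of systems consistent with the data `(u, x)`. -/
def SigmaD {n m T : ℕ} (u : Fin T → Fin m → ℝ) (x : Fin (T + 1) → Fin n → ℝ) :
    Set (Sys n m) :=
  {AB | Consistent AB.1 AB.2 u x}

/-- The matrix `X₋ = [x(0) ⋯ x(T-1)]`. -/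
def Xminus {n T : ℕ} (x : Fin (T + 1) → Fin n → ℝ) : Matrix (Fin n) (Fin T) ℝ :=
  Matrix.of fun i t => x t.castSucc i

/-- The matrix `X₊ = [x(1) ⋯ x(T)]`. -/
def Xplus {n T : ℕ} (x : Fin (T + 1) → Fin n → ℝ) : Matrix (Fin n) (Fin T) ℝ :=
  Matrix.of fun i t => x t.succ i

/-- The matrix `U₋ = [u(0) ⋯ u(T-1)]`. -/
def Uminus {m T : ℕ} (u : Fin T → Fin m → ℝ) : Matrix (Fin m) (Fin T) ℝ :=
  Matrix.of fun i t => u t i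

/-- The stacked matrix `[X₋; U₋]`. -/
def stacked {n m T : ℕ} (X : Matrix (Fin n) (Fin T) ℝ) (U : Matrix (Fin m) (Fin T) ℝ) :
    Matrix (Fin n ⊕ Fin m) (Fin T) ℝ :=
  Matrix.fromRows X U

/-- A real square matrix is Schur if all its complex eigenvalues have modulus `< 1`. -/
def Schur {n : ℕ} (M : Matrix (Fin n) (Fin n) ℝ) : Prop :=
  ∀ μ ∈ spectrum ℂ (M.map ((↑·) : ℝ → ℂ)), ‖μ‖ < 1

/-- The matrix `[C  AC  ⋯  A^{n-1}C]`. -/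
def reachMat {n : ℕ} (A : Matrix (Fin n) (Fin n) ℝ) {p : Type*} (C : Matrix (Fin n) p ℝ) :
    Matrix (Fin n) (Fin n × p) ℝ :=
  Matrix.of fun i q => (A ^ (q.1 : ℕ) * C) i q.2

/-- The column span of a matrix, as a submodule. -/
def colSpan {p : Type*} {q : Type*} [Fintype q] (M : Matrix p q ℝ) :
    Submodule ℝ (p → ℝ) :=
  LinearMap.range M.mulVecLin

/-- The reachable subspace `R(A, C)`: the column span of `[C AC ⋯ A^{n-1}C]`. -/
def Rspace {n : ℕ} (A : Matrix (Fin n) (Fin n) ℝ) {p : Type*} [Fintype p]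
    (C : Matrix (Fin n) p ℝ) : Submodule ℝ (Fin n → ℝ) :=
  colSpan (reachMat A C)

/-- `(A, B)` is controllable. -/
def Controllable {n m : ℕ} (A : Matrix (Fin n) (Fin n) ℝ) (B : Matrix (Fin n) (Fin m) ℝ) :
    Prop :=
  (reachMat A B).rank = n

/-- `(A, B)` is stabilizable. -/
def Stabilizable {n m : ℕ} (A : Matrix (Fin n) (Fin n) ℝ) (B : Matrix (Fin n) (Fin m) ℝ) :
    Prop :=
  ∃ K : Matrix (Fin m) (Fin n) ℝ, Schur (A + B * K)

/-- The set `Σ_cont` of controllable systems. -/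
def SigmaCont (n m : ℕ) : Set (Sys n m) := {AB | Controllable AB.1 AB.2}

/-- The set `Σ_stab` of stabilizable systems. -/
def SigmaStab (n m : ℕ) : Set (Sys n m) := {AB | Stabilizable AB.1 AB.2}

/-- Data `(u, x)` is `P`-informative for identification: `Σ_D ∩ P` is a singleton. -/
def InfId {n m T : ℕ} (P : Set (Sys n m)) (u : Fin T → Fin m → ℝ)
    (x : Fin (T + 1) → Fin n → ℝ) : Prop :=
  ∃ s : Sys n m, SigmaD u x ∩ P = {s}

/-- Data `(u, x)` is `P`-informative for stabilization. -/
def InfStab {n m T : ℕ} (P : Set (Sys n m)) (u : Fin T → Fin m → ℝ)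
    (x : Fin (T + 1) → Fin n → ℝ) : Prop :=
  ∃ K : Matrix (Fin m) (Fin n) ℝ, ∀ AB ∈ SigmaD u x ∩ P, Schur (AB.1 + AB.2 * K)

/-- An input is `P`-universal for identification. -/
def UnivId {n m T : ℕ} (P : Set (Sys n m)) (u : Fin T → Fin m → ℝ) : Prop :=
  ∀ AB ∈ P, ∀ x : Fin (T + 1) → Fin n → ℝ, Consistent AB.1 AB.2 u x → InfId P u x

/-- An input is `P`-universal for stabilization. -/
def UnivStab {n m T : ℕ} (P : Set (Sys n m)) (u : Fin T → Fin m → ℝ) : Prop :=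
  ∀ AB ∈ P, ∀ x : Fin (T + 1) → Fin n → ℝ, Consistent AB.1 AB.2 u x → InfStab P u x

/-- The Hankel matrix of depth `k` of the input sequence `u`. -/
def Hankel {m T : ℕ} (u : Fin T → Fin m → ℝ) (k : ℕ) :
    Matrix (Fin k × Fin m) (Fin (T + 1 - k)) ℝ :=
  Matrix.of fun q i =>
    u ⟨i.val + q.1.val, by have h1 := i.isLt; have h2 := q.1.isLt; omega⟩ q.2

/-- The input sequence `u` is persistently exciting of order `k`. -/
def PE {m T : ℕ} (u : Fin T → Fin m → ℝ) (k : ℕ) : Prop :=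
  (Hankel u k).rank = k * m

/-- The matrix `[B  x₀]` obtained by appending the column `x₀` to `B`. -/
def augCol {n m : ℕ} (B : Matrix (Fin n) (Fin m) ℝ) (x0 : Fin n → ℝ) :
    Matrix (Fin n) (Fin m ⊕ Fin 1) ℝ :=
  Matrix.fromCols B (Matrix.of fun i _ => x0 i)

/-- Precomposition with `Sum.inl`, extracting the `ℝ^n`-component of a vector in
`ℝ^n × ℝ^m ≃ (Fin n ⊕ Fin m) → ℝ`. -/
def projN (n m : ℕ) : ((Fin n ⊕ Fin m) → ℝ) →ₗ[ℝ] (Fin n → ℝ) :=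
  LinearMap.funLeft ℝ ℝ Sum.inl

/-!
If `(ξ, η)` is orthogonal to every column `(x(t), u(t))`, combine the relations
`ξ x(i+ℓ) + η u(i+ℓ) = 0`, `ℓ = 0, …, n`, with the coefficients `c_ℓ` of the characteristic
polynomial of `A`. Expanding `x(i+ℓ)` along the trajectory, Cayley–Hamilton removes `x(i)` and
leaves a vector in the left kernel of the depth-`(n+1)` Hankel matrix of `u`, which persistency
of excitation makes zero. As `χ_A` is monic this system is triangular: `η = 0` and `ξ A^k B = 0`
for `k < n`, hence also `ξ A^k x(0) = ξ x(k) = 0`. So `(ξ, η)` annihilates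
`R(A, [B x(0)]) × ℝ^m`. Conversely every state lies in `R(A, [B x(0)])`, which is `A`-invariant
and contains `x(0)` and the range of `B`.
-/

open Finset

open Polynomial in
theorem Matrix.pow_mem_span_pow_lt {R : Type*} [CommRing R] {n : ℕ}
    (A : Matrix (Fin n) (Fin n) R) (k : ℕ) :
    A ^ k ∈ Submodule.span R (Set.range fun i : Fin n => A ^ (i : ℕ)) := by
  nontriviality R
  rcases n.eq_zero_or_pos with rfl | hn
  · exact Subsingleton.elim (A ^ k) 0 ▸ zero_mem _
  have hdeg : (X ^ k %ₘ A.charpoly).natDegree < n := by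
    have hχ : A.charpoly ≠ 1 := fun h => by
      simpa [h, hn.ne] using A.charpoly_natDegree_eq_dim
    simpa using natDegree_modByMonic_lt (X ^ k) A.charpoly_monic hχ
  rw [A.pow_eq_aeval_mod_charpoly, aeval_eq_sum_range' hdeg, ← Fin.sum_univ_eq_sum_range]
  exact Submodule.sum_mem _ fun i _ => Submodule.smul_mem _ _ (Submodule.subset_span ⟨i, rfl⟩)

theorem Submodule.le_of_forall_dotProduct_eq_zero {K ι : Type*} [Field K] [Fintype ι]
    [DecidableEq ι] {S S' : Submodule K (ι → K)}
    (h : ∀ y : ι → K, (∀ v ∈ S, y ⬝ᵥ v = 0) → ∀ v ∈ S', y ⬝ᵥ v = 0) : S' ≤ S := by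
  rw [← Subspace.dualAnnihilator_le_dualAnnihilator_iff]
  intro φ hφ
  obtain ⟨y, rfl⟩ := (dotProductEquiv K ι).surjective φ
  simp only [Submodule.mem_dualAnnihilator, dotProductEquiv_apply_apply] at hφ ⊢
  exact h y hφ

theorem Finset.sum_range_sum_range_comm {M : Type*} [AddCommMonoid M] (n : ℕ) (F : ℕ → ℕ → M) :
    ∑ ℓ ∈ range (n + 1), ∑ j ∈ range ℓ, F ℓ j =
      ∑ j ∈ range (n + 1), ∑ k ∈ range (n - j), F (j + 1 + k) j := by
  rw [sum_comm' (t' := range (n + 1)) (s' := fun j => Ico (j + 1) (n + 1))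
    (fun ℓ j => by simp only [mem_range, mem_Ico]; omega)]
  refine sum_congr rfl fun j _ => ?_
  rw [sum_Ico_eq_sum_range, Nat.add_sub_add_right]

theorem Fin.extend_val_apply_of_lt {N : ℕ} {α : Type*} (f : Fin N → α) (e : ℕ → α) {t : ℕ}
    (ht : t < N) : Function.extend Fin.val f e t = f ⟨t, ht⟩ :=
  Fin.val_injective.extend_apply f e ⟨t, ht⟩

section Reachable

variable {n : ℕ} (A : Matrix (Fin n) (Fin n) ℝ) {p : Type*} [Fintype p] (C : Matrix (Fin n) p ℝ)

theorem reachMat_mulVec (w : Fin n × p → ℝ) :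
    reachMat A C *ᵥ w = ∑ k : Fin n, (A ^ (k : ℕ) * C) *ᵥ fun q => w (k, q) := by
  ext i
  simp only [mulVec, dotProduct, reachMat, of_apply, Finset.sum_apply, Fintype.sum_prod_type]

theorem pow_mul_mulVec_mem_Rspace (k : ℕ) (z : p → ℝ) : (A ^ k * C) *ᵥ z ∈ Rspace A C := by
  refine Submodule.span_induction (p := fun M _ => (M * C) *ᵥ z ∈ Rspace A C) ?_ ?_ ?_ ?_
    (A.pow_mem_span_pow_lt k)
  · rintro _ ⟨i, rfl⟩
    refine ⟨fun q => (Pi.single i z : Fin n → p → ℝ) q.1 q.2, ?_⟩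
    rw [mulVecLin_apply, reachMat_mulVec,
      Finset.sum_eq_single i (fun j _ hj => by simp [hj, ← Pi.zero_def]) (by simp)]
    simp
  · simp
  · intro M N _ _ hM hN
    simpa only [Matrix.add_mul, add_mulVec] using add_mem hM hN
  · intro r M _ hM
    simpa only [Matrix.smul_mul, smul_mulVec] using Submodule.smul_mem _ r hM

theorem mulVec_mem_Rspace {v : Fin n → ℝ} (hv : v ∈ Rspace A C) : A *ᵥ v ∈ Rspace A C := by
  obtain ⟨w, rfl⟩ := hv
  rw [mulVecLin_apply, reachMat_mulVec, mulVec_sum]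
  refine Submodule.sum_mem _ fun k _ => ?_
  rw [mulVec_mulVec, ← Matrix.mul_assoc, ← pow_succ']
  exact pow_mul_mulVec_mem_Rspace A C _ _

variable {A C} in
theorem dotProduct_eq_zero_of_mem_Rspace {ξ v : Fin n → ℝ}
    (hξ : ∀ k : Fin n, ξ ᵥ* (A ^ (k : ℕ) * C) = 0) (hv : v ∈ Rspace A C) : ξ ⬝ᵥ v = 0 := by
  obtain ⟨w, rfl⟩ := hv
  simp [reachMat_mulVec, dotProduct_sum, dotProduct_mulVec, hξ]

end Reachable

theorem augCol_mulVec_sumElim {n m : ℕ} (B : Matrix (Fin n) (Fin m) ℝ) (x0 : Fin n → ℝ)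
    (z : Fin m → ℝ) (c : Fin 1 → ℝ) : augCol B x0 *ᵥ Sum.elim z c = B *ᵥ z + c 0 • x0 := by
  ext i
  simp [augCol, mulVec, dotProduct, mul_comm]

theorem vecMul_mul_augCol {n m : ℕ} (ξ : Fin n → ℝ) (M : Matrix (Fin n) (Fin n) ℝ)
    (B : Matrix (Fin n) (Fin m) ℝ) (x0 : Fin n → ℝ) :
    ξ ᵥ* (M * augCol B x0) = Sum.elim (ξ ᵥ* (M * B)) fun _ => ξ ⬝ᵥ (M *ᵥ x0) := by
  ext (p | _) <;> simp [augCol, vecMul, dotProduct, mulVec, mul_apply, Finset.mul_sum]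

section Trajectory

variable {n m : ℕ} (A : Matrix (Fin n) (Fin n) ℝ) (B : Matrix (Fin n) (Fin m) ℝ) {T : ℕ}
  {x : ℕ → Fin n → ℝ} {u : ℕ → Fin m → ℝ}

variable {A B} in
theorem trajectory_eq (hx : ∀ t < T, x (t + 1) = A *ᵥ x t + B *ᵥ u t) {i ℓ : ℕ}
    (h : i + ℓ ≤ T) :
    x (i + ℓ) = A ^ ℓ *ᵥ x i + ∑ j ∈ range ℓ, (A ^ (ℓ - 1 - j) * B) *ᵥ u (i + j) := by
  induction ℓ with
  | zero => simp
  | succ ℓ ih =>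
    rw [← add_assoc, hx _ (by omega), ih (by omega), mulVec_add, mulVec_sum, mulVec_mulVec,
      ← pow_succ', sum_range_succ, Nat.add_sub_cancel, Nat.sub_self, pow_zero, Matrix.one_mul,
      add_assoc]
    congr 2
    refine sum_congr rfl fun j hj => ?_
    have hjℓ := mem_range.mp hj
    rw [mulVec_mulVec, ← Matrix.mul_assoc, ← pow_succ', show ℓ - 1 - j + 1 = ℓ - j by omega]

noncomputable def hankelAnnihilator (ξ : Fin n → ℝ) (η : Fin m → ℝ) (j : ℕ) : Fin m → ℝ :=
  A.charpoly.coeff j • η +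
    ∑ k ∈ range (n - j), A.charpoly.coeff (j + 1 + k) • (ξ ᵥ* (A ^ k * B))

variable {A B} in
theorem sum_hankelAnnihilator_dotProduct (hx : ∀ t < T, x (t + 1) = A *ᵥ x t + B *ᵥ u t)
    (ξ : Fin n → ℝ) (η : Fin m → ℝ) {i : ℕ} (hi : i + n ≤ T) :
    ∑ j ∈ range (n + 1), hankelAnnihilator A B ξ η j ⬝ᵥ u (i + j) =
      ∑ ℓ ∈ range (n + 1), A.charpoly.coeff ℓ * (ξ ⬝ᵥ x (i + ℓ) + η ⬝ᵥ u (i + ℓ)) := by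
  have hχ : Polynomial.aeval A A.charpoly = ∑ ℓ ∈ range (n + 1), A.charpoly.coeff ℓ • A ^ ℓ := by
    rw [Polynomial.aeval_eq_sum_range, charpoly_natDegree_eq_dim, Fintype.card_fin]
  symm
  calc ∑ ℓ ∈ range (n + 1), A.charpoly.coeff ℓ * (ξ ⬝ᵥ x (i + ℓ) + η ⬝ᵥ u (i + ℓ))
      = ξ ⬝ᵥ (Polynomial.aeval A A.charpoly *ᵥ x i)
        + ∑ ℓ ∈ range (n + 1), ∑ j ∈ range ℓ,
            A.charpoly.coeff ℓ * ((ξ ᵥ* (A ^ (ℓ - 1 - j) * B)) ⬝ᵥ u (i + j))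
        + ∑ ℓ ∈ range (n + 1), A.charpoly.coeff ℓ * (η ⬝ᵥ u (i + ℓ)) := by
        rw [hχ, sum_mulVec, dotProduct_sum, ← sum_add_distrib, ← sum_add_distrib]
        refine sum_congr rfl fun ℓ hℓ => ?_
        rw [trajectory_eq hx (by simp at hℓ; omega)]
        simp only [dotProduct_add, dotProduct_sum, smul_mulVec, dotProduct_smul, smul_eq_mul,
          dotProduct_mulVec, mul_add, mul_sum]
    _ = ∑ j ∈ range (n + 1), hankelAnnihilator A B ξ η j ⬝ᵥ u (i + j) := by
        rw [aeval_self_charpoly, zero_mulVec, dotProduct_zero, zero_add,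
          sum_range_sum_range_comm, ← sum_add_distrib]
        refine sum_congr rfl fun j _ => ?_
        simp only [hankelAnnihilator, add_dotProduct, sum_dotProduct, smul_dotProduct,
          smul_eq_mul, show ∀ k, j + 1 + k - 1 - j = k by omega]
        exact add_comm _ _

theorem eq_zero_of_hankelAnnihilator_eq_zero {ξ : Fin n → ℝ} {η : Fin m → ℝ}
    (h : ∀ j ≤ n, hankelAnnihilator A B ξ η j = 0) :
    η = 0 ∧ ∀ k < n, ξ ᵥ* (A ^ k * B) = 0 := by
  have hlead : A.charpoly.coeff n = 1 := by simpa using A.charpoly_monic.coeff_natDegree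
  have hη : η = 0 := by simpa [hankelAnnihilator, hlead] using h n le_rfl
  refine ⟨hη, fun k => ?_⟩
  induction k using Nat.strong_induction_on with
  | _ k ih =>
    intro hk
    have hk' := h (n - 1 - k) (by omega)
    rwa [hankelAnnihilator, hη, smul_zero, zero_add, show n - (n - 1 - k) = k + 1 by omega,
      sum_range_succ, sum_eq_zero fun i hi => by
        rw [ih i (mem_range.mp hi) ((mem_range.mp hi).trans hk), smul_zero],
      zero_add, show n - 1 - k + 1 + k = n by omega, hlead, one_smul] at hk'

variable {A B} in
theorem dotProduct_pow_mulVec_eq_zero (hx : ∀ t < T, x (t + 1) = A *ᵥ x t + B *ᵥ u t)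
    {ξ : Fin n → ℝ} (hξx : ∀ t < T, ξ ⬝ᵥ x t = 0) (hξB : ∀ k < n, ξ ᵥ* (A ^ k * B) = 0)
    {k : ℕ} (hk : k < n) (hkT : k < T) : ξ ⬝ᵥ (A ^ k *ᵥ x 0) = 0 := by
  have hxk := trajectory_eq hx (i := 0) (ℓ := k) (by omega)
  rw [zero_add] at hxk
  rw [← hξx k hkT, hxk, dotProduct_add, dotProduct_sum, left_eq_add]
  exact sum_eq_zero fun j hj => by
    rw [dotProduct_mulVec, hξB _ (by omega), zero_dotProduct]

end Trajectory

section PersistentExcitation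

variable {m T k : ℕ} {u : Fin T → Fin m → ℝ}

theorem PE.vecMul_injective (hPE : PE u k) : Function.Injective (Hankel u k).vecMul := by
  rw [vecMul_injective_iff, linearIndependent_iff_card_eq_finrank_span, Set.finrank,
    ← rank_eq_finrank_span_row, hPE, Fintype.card_prod, Fintype.card_fin, Fintype.card_fin]

theorem PE.mul_le_length (hPE : PE u k) : k * m ≤ T + 1 - k := by
  have h := (Hankel u k).rank_le_card_width
  rwa [hPE, Fintype.card_fin] at h

theorem PE.eq_zero_of_sum_dotProduct_eq_zero (hPE : PE u k) {w : ℕ → Fin m → ℝ}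
    (hw : ∀ i, i + k ≤ T → ∑ j ∈ range k, w j ⬝ᵥ Function.extend Fin.val u 0 (i + j) = 0)
    {j : ℕ} (hj : j < k) : w j = 0 := by
  have hW : (fun q : Fin k × Fin m => w q.1 q.2) ᵥ* Hankel u k = 0 := by
    ext i
    rw [Pi.zero_apply, ← hw i (by omega), ← Fin.sum_univ_eq_sum_range]
    simp only [vecMul, dotProduct, Fintype.sum_prod_type, Hankel, of_apply]
    refine sum_congr rfl fun j _ => sum_congr rfl fun p _ => ?_
    rw [Fin.extend_val_apply_of_lt u 0 (by omega)]
  ext p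
  exact congrFun (hPE.vecMul_injective (hW.trans (zero_vecMul _).symm)) (⟨j, hj⟩, p)

end PersistentExcitation

section Data

variable {n m T : ℕ} {A : Matrix (Fin n) (Fin n) ℝ} {B : Matrix (Fin n) (Fin m) ℝ}
  {u : Fin T → Fin m → ℝ} {x : Fin (T + 1) → Fin n → ℝ}

theorem Consistent.mem_Rspace (hcons : Consistent A B u x) (t : Fin (T + 1)) :
    x t ∈ Rspace A (augCol B (x 0)) := by
  induction t using Fin.induction with
  | zero =>
    simpa [augCol_mulVec_sumElim] using
      pow_mul_mulVec_mem_Rspace A (augCol B (x 0)) 0 (Sum.elim 0 1)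
  | succ t ih =>
    rw [hcons t]
    refine add_mem (mulVec_mem_Rspace A _ ih) ?_
    simpa [augCol_mulVec_sumElim] using
      pow_mul_mulVec_mem_Rspace A (augCol B (x 0)) 0 (Sum.elim (u t) 0)

theorem Consistent.colSpan_stacked_le (hcons : Consistent A B u x) :
    colSpan (stacked (Xminus x) (Uminus u)) ≤ (Rspace A (augCol B (x 0))).comap (projN n m) := by
  rw [colSpan, range_mulVecLin, Submodule.span_le]
  rintro _ ⟨t, rfl⟩
  exact hcons.mem_Rspace t.castSucc

theorem Consistent.annihilator_of_PE (hm : 0 < m) (hcons : Consistent A B u x)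
    (hPE : PE u (n + 1)) {ξ : Fin n → ℝ} {η : Fin m → ℝ}
    (hann : ∀ t : Fin T, ξ ⬝ᵥ x t.castSucc + η ⬝ᵥ u t = 0) :
    η = 0 ∧ ∀ k : Fin n, ξ ᵥ* (A ^ (k : ℕ) * augCol B (x 0)) = 0 := by
  set x' : ℕ → Fin n → ℝ := Function.extend Fin.val x 0
  set u' : ℕ → Fin m → ℝ := Function.extend Fin.val u 0
  have hx' : ∀ t (ht : t < T + 1), x' t = x ⟨t, ht⟩ := fun t => Fin.extend_val_apply_of_lt x 0
  have hu' : ∀ t (ht : t < T), u' t = u ⟨t, ht⟩ := fun t => Fin.extend_val_apply_of_lt u 0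
  have hnT : n < T := by
    have := hPE.mul_le_length
    have := Nat.le_mul_of_pos_right (n + 1) hm
    omega
  have hdyn : ∀ t < T, x' (t + 1) = A *ᵥ x' t + B *ᵥ u' t := fun t ht => by
    rw [hx' _ (by omega), hx' _ (by omega), hu' _ ht]
    exact hcons ⟨t, ht⟩
  have hann' : ∀ t < T, ξ ⬝ᵥ x' t + η ⬝ᵥ u' t = 0 := fun t ht => by
    rw [hx' _ (by omega), hu' _ ht]
    exact hann ⟨t, ht⟩
  have hw : ∀ j < n + 1, hankelAnnihilator A B ξ η j = 0 := fun j =>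
    hPE.eq_zero_of_sum_dotProduct_eq_zero fun i hi => by
      rw [sum_hankelAnnihilator_dotProduct hdyn ξ η (by omega)]
      exact sum_eq_zero fun ℓ hℓ => by rw [hann' _ (by simp at hℓ; omega), mul_zero]
  obtain ⟨rfl, hB⟩ := eq_zero_of_hankelAnnihilator_eq_zero A B fun j hj => hw j (by omega)
  refine ⟨rfl, fun k => ?_⟩
  have hx0 : ξ ⬝ᵥ (A ^ (k : ℕ) *ᵥ x 0) = 0 := by
    simpa [hx' 0 T.succ_pos] using dotProduct_pow_mulVec_eq_zero hdyn
      (fun t ht => by simpa using hann' t ht) hB k.isLt (by omega)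
  rw [vecMul_mul_augCol, hB k k.isLt, hx0]
  exact Sum.elim_zero_zero

end Data

theorem stmt_14_general {n m T : ℕ} (hm : 0 < m)
    (A : Matrix (Fin n) (Fin n) ℝ) (B : Matrix (Fin n) (Fin m) ℝ)
    (u : Fin T → Fin m → ℝ) (x : Fin (T + 1) → Fin n → ℝ)
    (hcons : Consistent A B u x) (hPE : PE u (n + 1)) :
    colSpan (stacked (Xminus x) (Uminus u)) =
      (Rspace A (augCol B (x 0))).comap (projN n m) := by
  refine le_antisymm hcons.colSpan_stacked_le
    (Submodule.le_of_forall_dotProduct_eq_zero fun y hy v hv => ?_)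
  obtain ⟨ξ, η, rfl⟩ : ∃ ξ η, y = Sum.elim ξ η := ⟨_, _, (Sum.elim_comp_inl_inr y).symm⟩
  have hann : ∀ t : Fin T, ξ ⬝ᵥ x t.castSucc + η ⬝ᵥ u t = 0 := fun t => by
    have := hy _ ⟨Pi.single t 1, rfl⟩
    rwa [mulVecLin_apply, dotProduct_mulVec, stacked, sumElim_vecMul_fromRows,
      dotProduct_single_one] at this
  obtain ⟨rfl, hξ⟩ := hcons.annihilator_of_PE hm hPE hann
  rw [← Sum.elim_comp_inl_inr v, sumElim_dotProduct_sumElim, zero_dotProduct, add_zero]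
  exact dotProduct_eq_zero_of_mem_Rspace hξ hv

/-- For data consistent with `(A,B)`, if the input is persistently
exciting of order `n+1`, then `im [X₋; U₋] = R(A,[B x(0)]) × ℝ^m`. -/
theorem stmt_14 {n m T : ℕ} (hn : 0 < n) (hm : 0 < m)
    (A : Matrix (Fin n) (Fin n) ℝ) (B : Matrix (Fin n) (Fin m) ℝ)
    (u : Fin T → Fin m → ℝ) (x : Fin (T + 1) → Fin n → ℝ)
    (hcons : Consistent A B u x) (hPE : PE u (n + 1)) :
    colSpan (stacked (Xminus x) (Uminus u)) =
      (Rspace A (augCol B (x 0))).comap (projN n m) :=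
  stmt_14_general hm A B u x hcons hPE
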